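/- arXiv:1303.1323 — 2 statements merged into one kernel-verified Lean document; each statement's English description precedes it below -/
import Mathlib

section
/- Let L be the abelian group generated by x₁,…,x_t with relations p₁x₁ = p₂x₂ = ⋯ = p_t x_t = c. Then every element x of L can be written uniquely in the form x = Σᵢ lᵢ xᵢ + l·c with integers 0 ≤ lᵢ < pᵢ and l ∈ ℤ. -/
/-- The subgroup of relations `pᵢ • xᵢ = c` in `ℤ^t ⊕ ℤ`, where `xᵢ` is the `i`-th standard
basis vector of the first factor and `c` is the generator of the second factor. -/
def tubularRel (t : ℕ) (p : Fin t → ℕ) : AddSubgroup ((Fin t → ℤ) × ℤ) :=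
  AddSubgroup.closure {v | ∃ i : Fin t, v = (Pi.single i (p i : ℤ), -1)}

/-- The parametrization of the relation subgroup. -/
def tubularPhi (t : ℕ) (p : Fin t → ℕ) : (Fin t → ℤ) →+ ((Fin t → ℤ) × ℤ) where
  toFun a := (fun i => a i * p i, -∑ i, a i)
  map_zero' := by refine Prod.ext (funext fun i => ?_) ?_ <;> simp
  map_add' a b := by
    refine Prod.ext (funext fun i => ?_) ?_ <;> simp [add_mul, Finset.sum_add_distrib] <;> ring

lemma tubularPhi_apply (t : ℕ) (p : Fin t → ℕ) (a : Fin t → ℤ) :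
    tubularPhi t p a = (fun i => a i * p i, -∑ i, a i) := rfl

lemma tubularRel_eq_range (t : ℕ) (p : Fin t → ℕ) :
    tubularRel t p = (tubularPhi t p).range := by
  apply le_antisymm
  · rw [tubularRel, AddSubgroup.closure_le]
    rintro v ⟨i, rfl⟩
    refine ⟨Pi.single i 1, ?_⟩
    rw [tubularPhi_apply]
    refine Prod.ext (funext fun j => ?_) ?_
    · rcases eq_or_ne j i with rfl | h
      · simp [Pi.single_apply]
      · simp [Pi.single_apply, h]
    · simp [Pi.single_apply]
  · rintro v ⟨a, rfl⟩
    have : tubularPhi t p a = ∑ i, a i • ((Pi.single i (p i : ℤ), -1) : (Fin t → ℤ) × ℤ) := by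
      refine Prod.ext ?_ ?_
      · rw [Prod.fst_sum]; funext j
        simp [tubularPhi_apply, Finset.sum_apply, Pi.single_apply, mul_comm]
      · rw [Prod.snd_sum]; simp [tubularPhi_apply]
    rw [this]
    refine sum_mem fun i _ => AddSubgroup.zsmul_mem _ ?_ _
    exact AddSubgroup.subset_closure ⟨i, rfl⟩

/-- Every element of `L` has a unique normal form `Σᵢ lᵢ xᵢ + l c` with `0 ≤ lᵢ < pᵢ`. -/
theorem stmt_0 (t : ℕ) (ht : 1 ≤ t) (p : Fin t → ℕ) (hp : ∀ i, 0 < p i)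
    (x : ((Fin t → ℤ) × ℤ) ⧸ tubularRel t p) :
    ∃! lm : (Fin t → ℤ) × ℤ,
      (∀ i, 0 ≤ lm.1 i ∧ lm.1 i < (p i : ℤ)) ∧
        (QuotientAddGroup.mk lm : ((Fin t → ℤ) × ℤ) ⧸ tubularRel t p) = x := by
  obtain ⟨⟨v, m⟩, rfl⟩ := QuotientAddGroup.mk_surjective x
  have hp' : ∀ i, (0 : ℤ) < p i := fun i => Int.natCast_pos.mpr (hp i)
  refine ⟨(fun i => v i % p i, m + ∑ i, v i / p i), ⟨fun i =>
    ⟨Int.emod_nonneg _ (hp' i).ne', Int.emod_lt_of_pos _ (hp' i)⟩, ?_⟩, ?_⟩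
  · rw [QuotientAddGroup.eq, tubularRel_eq_range]
    refine ⟨fun i => v i / p i, ?_⟩
    refine Prod.ext (funext fun i => ?_) ?_
    · show v i / p i * p i = -(v i % p i) + v i
      have := Int.mul_ediv_add_emod (v i) (p i)
      linarith
    · show -∑ i, v i / p i = -(m + ∑ i, v i / p i) + m
      ring
  · rintro ⟨w, n⟩ ⟨hw, heq⟩
    rw [QuotientAddGroup.eq, tubularRel_eq_range] at heq
    obtain ⟨a, ha⟩ := heq
    have h1 : ∀ i, a i * p i = -w i + v i := fun i => congrFun (congrArg Prod.fst ha) i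
    have h2 : -∑ i, a i = -n + m := congrArg Prod.snd ha
    have hw' : ∀ i, w i = v i % p i := by
      intro i
      have h := h1 i
      conv_rhs => rw [show v i = w i + a i * p i by linarith]
      rw [Int.add_mul_emod_self_right]
      exact (Int.emod_eq_of_lt (hw i).1 (hw i).2).symm
    have ha' : ∀ i, a i = v i / p i := by
      intro i
      have h := h1 i
      rw [hw' i] at h
      have hd := Int.mul_ediv_add_emod (v i) (p i)
      have : a i * p i = (v i / p i) * p i := by linarith
      exact mul_right_cancel₀ (hp' i).ne' this
    refine Prod.ext (funext hw') ?_
    show n = m + ∑ i, v i / p i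
    have : ∑ i, a i = ∑ i, v i / p i := Finset.sum_congr rfl fun i _ => ha' i
    rw [this] at h2
    linarith
end

section
/- In the group L of weight type (2,2,2,2), with generators x₁,…,x₄ and relations 2xᵢ = c, let δ be the degree map with δ(xᵢ)=1; then every element x ∈ L with δ(x) = 0 satisfies 2x = 0. -/
/-- The generator `xᵢ`. -/
def xElem (t : ℕ) (p : Fin t → ℕ) (i : Fin t) : ((Fin t → ℤ) × ℤ) ⧸ tubularRel t p :=
  QuotientAddGroup.mk (Pi.single i 1, 0)

/-- `z • (xᵢ, 0)` is `(Pi.single i z, 0)`. -/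
lemma smul_single_pair (z : ℤ) (i : Fin 4) :
    z • ((Pi.single i 1, 0) : (Fin 4 → ℤ) × ℤ) = (Pi.single i z, 0) := by
  refine Prod.ext ?_ (by simp)
  show z • (Pi.single i (1:ℤ) : Fin 4 → ℤ) = Pi.single i z
  ext j; simp [Pi.single_apply]

lemma smul_rel_pair (z : ℤ) (i : Fin 4) :
    z • ((Pi.single i (2:ℤ), (-1:ℤ)) : (Fin 4 → ℤ) × ℤ) = (Pi.single i (2 * z), -z) := by
  refine Prod.ext ?_ (by simp)
  show z • (Pi.single i (2:ℤ) : Fin 4 → ℤ) = Pi.single i (2 * z)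
  ext j; simp [Pi.single_apply, mul_comm]

/-- For weight type `(2,2,2,2)` with `δ : L → ℤ` determined by `δ(xᵢ) = 1`,
every element of degree zero is killed by 2. -/
theorem stmt_15 (δ : (((Fin 4 → ℤ) × ℤ) ⧸ tubularRel 4 (fun _ => 2)) →+ ℤ)
    (hδ : ∀ i, δ (xElem 4 (fun _ => 2) i) = 1) :
    ∀ x, δ x = 0 → (2 : ℤ) • x = 0 := by
  have hgen : ∀ i : Fin 4, ((Pi.single i (2:ℤ), (-1:ℤ)) : (Fin 4 → ℤ) × ℤ) ∈
      tubularRel 4 (fun _ => 2) := fun i => AddSubgroup.subset_closure ⟨i, by norm_num⟩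
  -- mk (0,1) = 2 • x₀
  have h01 : (QuotientAddGroup.mk ((0 : Fin 4 → ℤ), (1:ℤ)) :
      ((Fin 4 → ℤ) × ℤ) ⧸ tubularRel 4 (fun _ => 2)) = (2:ℤ) • xElem 4 (fun _ => 2) 0 := by
    rw [eq_comm, xElem]
    show (QuotientAddGroup.mk ((2:ℤ) • ((Pi.single 0 1, 0) : (Fin 4 → ℤ) × ℤ)) : _) = _
    rw [QuotientAddGroup.eq_iff_sub_mem, smul_single_pair]
    convert hgen 0 using 2 <;> simp
  -- decomposition of mk (v, n)
  have hdecomp : ∀ (v : Fin 4 → ℤ) (n : ℤ),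
      (QuotientAddGroup.mk (v, n) : ((Fin 4 → ℤ) × ℤ) ⧸ tubularRel 4 (fun _ => 2)) =
        (∑ i, v i • xElem 4 (fun _ => 2) i) + n • ((2:ℤ) • xElem 4 (fun _ => 2) 0) := by
    intro v n
    rw [← h01]
    have hv : ((v, n) : (Fin 4 → ℤ) × ℤ) =
        (∑ i, v i • ((Pi.single i 1, 0) : (Fin 4 → ℤ) × ℤ)) + n • ((0 : Fin 4 → ℤ), (1:ℤ)) := by
      refine Prod.ext ?_ ?_
      · simp only [Prod.fst_add, Prod.fst_sum, smul_single_pair, Prod.smul_fst]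
        simp [Finset.univ_sum_single]
      · simp only [Prod.snd_add, Prod.snd_sum, smul_single_pair, Prod.smul_snd]
        simp
    calc (QuotientAddGroup.mk (v, n) :
            ((Fin 4 → ℤ) × ℤ) ⧸ tubularRel 4 (fun _ => 2))
        = QuotientAddGroup.mk ((∑ i, v i • ((Pi.single i 1, 0) : (Fin 4 → ℤ) × ℤ))
            + n • ((0 : Fin 4 → ℤ), (1:ℤ))) := by rw [← hv]
      _ = _ := by
          rw [QuotientAddGroup.mk_add, QuotientAddGroup.mk_sum]
          rfl
  intro x hx
  induction x using QuotientAddGroup.induction_on with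
  | H z =>
    obtain ⟨v, n⟩ := z
    have hval : (∑ i, v i) + 2 * n = 0 := by
      rw [hdecomp] at hx
      simpa [hδ, mul_comm] using hx
    show ((2:ℤ) • (QuotientAddGroup.mk (v, n) : _)) = 0
    rw [show ((2:ℤ) • (QuotientAddGroup.mk (v, n) :
        ((Fin 4 → ℤ) × ℤ) ⧸ tubularRel 4 (fun _ => 2))) =
        QuotientAddGroup.mk ((2:ℤ) • ((v, n) : (Fin 4 → ℤ) × ℤ)) from rfl,
      QuotientAddGroup.eq_zero_iff]
    have key : ((2:ℤ) • ((v, n) : (Fin 4 → ℤ) × ℤ)) =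
        ∑ i, v i • ((Pi.single i (2:ℤ), (-1:ℤ)) : (Fin 4 → ℤ) × ℤ) := by
      refine Prod.ext ?_ ?_
      · simp only [Prod.fst_sum, smul_rel_pair, Prod.smul_fst]
        ext j
        simp only [Finset.sum_apply, Pi.single_apply, Pi.smul_apply, smul_eq_mul]
        rw [Finset.sum_eq_single j (by intro b _ hb; simp [Ne.symm hb]) (by simp)]
        simp [mul_comm]
      · simp only [Prod.snd_sum, smul_rel_pair, Prod.smul_snd, smul_eq_mul]
        simp only [Finset.sum_neg_distrib]
        linarith [hval]
    rw [key]
    exact AddSubgroup.sum_mem _ fun i _ => AddSubgroup.zsmul_mem _ (hgen i) _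
end
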